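/- arXiv:2410.18440 — 2 statements merged into one kernel-verified Lean document; each statement's English description precedes it below -/
import Mathlib

section
/- Let η, ς, ι be positive real numbers and let ϖ : [0,∞) → ℝ be differentiable with ϖ(0) > 0. Suppose that for every t ≥ 0 we have ϖ'(t) = -η·ϖ(t) + ς·h(t), where h : [0,∞) → ℝ satisfies ι·(-h(t)) < ϖ(t) for all t ≥ 0. Then for every t ≥ 0, ϖ(t) ≥ ϖ(0)·exp(-(η + ς/ι)·t), and in particular ϖ(t) > 0 for all t ≥ 0. -/
/-- Lemma 1 (deterministic core): the dynamic threshold variable `ϖ` evolving by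
`ϖ' = -η·ϖ + ς·h` with event condition `ι·(-h) < ϖ` satisfies
`ϖ(t) ≥ ϖ(0)·exp(-(η + ς/ι)·t) > 0` for all `t ≥ 0`. -/
theorem stmt0 (η ς ι : ℝ) (hη : 0 < η) (hς : 0 < ς) (hι : 0 < ι)
    (ϖ h : ℝ → ℝ) (hϖ0 : 0 < ϖ 0)
    (hderiv : ∀ t ≥ (0 : ℝ), HasDerivAt ϖ (-η * ϖ t + ς * h t) t)
    (hbound : ∀ t ≥ (0 : ℝ), ι * (-h t) < ϖ t) :
    ∀ t ≥ (0 : ℝ), ϖ 0 * Real.exp (-(η + ς / ι) * t) ≤ ϖ t ∧ 0 < ϖ t := by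
  set c : ℝ := η + ς / ι with hc
  set g : ℝ → ℝ := fun t => ϖ t * Real.exp (c * t) with hg
  have hgderiv : ∀ t ≥ (0 : ℝ),
      HasDerivAt g ((ς / ι * (ι * h t + ϖ t)) * Real.exp (c * t)) t := by
    intro t ht
    have h1 := (hderiv t ht).mul (((Real.hasDerivAt_exp (c * t)).comp t
      ((hasDerivAt_id t).const_mul c)))
    convert h1 using 1
    case e'_4 => rfl
    case e'_5 => rfl
    case e'_8 => rfl
    simp only [Function.comp_apply]
    set E := Real.exp (c * t)
    rw [hc]
    field_simp
    ring
  have hmono : MonotoneOn g (Set.Ici (0 : ℝ)) := by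
    apply monotoneOn_of_deriv_nonneg (convex_Ici 0)
    · intro t ht
      exact ((hgderiv t ht).continuousAt.continuousWithinAt)
    · intro t ht
      rw [interior_Ici] at ht
      exact ((hgderiv t (le_of_lt ht)).differentiableAt.differentiableWithinAt)
    · intro t ht
      rw [interior_Ici] at ht
      rw [(hgderiv t (le_of_lt ht)).deriv]
      have hb := hbound t (le_of_lt ht)
      have : 0 < ι * h t + ϖ t := by nlinarith
      positivity
  intro t ht
  have hle : g 0 ≤ g t := hmono (Set.self_mem_Ici) ht ht
  simp only [hg, mul_zero, Real.exp_zero, mul_one] at hle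
  have hexp : 0 < Real.exp (c * t) := Real.exp_pos _
  have key : ϖ 0 * Real.exp (-c * t) ≤ ϖ t := by
    rw [neg_mul, Real.exp_neg]
    rw [mul_inv_le_iff₀ hexp]
    exact hle
  refine ⟨key, lt_of_lt_of_le ?_ key⟩
  positivity
end

section
/- Let a > 0, λ > 0, C > 0, w > 0, and let (t_k)_{k∈ℕ} be a strictly increasing sequence of nonnegative real numbers that is bounded above. Then it is NOT the case that w·e^{−λ·t_{k+1}} ≤ C·(e^{a·(t_{k+1} − t_k)} − 1)² holds for every k ∈ ℕ. -/
/-! A bounded monotone sequence converges to some `L`, so its gaps tend to `0`. Passing to the limit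
in the inequality then gives `w e^{-λ L} ≤ C (e^0 - 1)^2 = 0`, contradicting `w > 0`. -/

open Filter Topology

theorem Filter.Tendsto.sub_succ_self {G : Type*} [AddCommGroup G] [TopologicalSpace G]
    [IsTopologicalAddGroup G] {u : ℕ → G} {L : G} (hu : Tendsto u atTop (𝓝 L)) :
    Tendsto (fun k => u (k + 1) - u k) atTop (𝓝 0) := by
  simpa using (hu.comp (tendsto_add_atTop_nat 1)).sub hu

theorem tendsto_mul_sq_exp_gap_sub_one {a C L : ℝ} {t : ℕ → ℝ} (ht : Tendsto t atTop (𝓝 L)) :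
    Tendsto (fun k => C * (Real.exp (a * (t (k + 1) - t k)) - 1) ^ 2) atTop (𝓝 0) := by
  have hexp : Tendsto (fun k => Real.exp (a * (t (k + 1) - t k))) atTop (𝓝 1) := by
    simpa using (ht.sub_succ_self.const_mul a).rexp
  simpa using ((hexp.sub_const 1).pow 2).const_mul C

theorem stmt10_general (a lam C w : ℝ)
    (hw : 0 < w) (t : ℕ → ℝ) (hmono : StrictMono t)
    (hbdd : BddAbove (Set.range t)) :
    ¬ (∀ k : ℕ, w * Real.exp (-lam * t (k + 1)) ≤
        C * (Real.exp (a * (t (k + 1) - t k)) - 1) ^ 2) := by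
  intro h
  have ht : Tendsto t atTop (𝓝 (⨆ k, t k)) := tendsto_atTop_ciSup hmono.monotone hbdd
  have hlhs : Tendsto (fun k => w * Real.exp (-lam * t (k + 1))) atTop
      (𝓝 (w * Real.exp (-lam * ⨆ k, t k))) :=
    (((ht.comp (tendsto_add_atTop_nat 1)).const_mul (-lam)).rexp).const_mul w
  have hlim := le_of_tendsto_of_tendsto' hlhs (tendsto_mul_sq_exp_gap_sub_one ht) h
  exact (mul_pos hw (Real.exp_pos _)).not_ge hlim

/-- Contradiction argument excluding Zeno behavior: a strictly increasing,
bounded-above sequence of nonnegative triggering instants cannot satisfy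
`w·e^{−λt_{k+1}} ≤ C·(e^{a(t_{k+1}−t_k)} − 1)²` for every `k`. -/
theorem stmt10 (a lam C w : ℝ) (ha : 0 < a) (hlam : 0 < lam) (hC : 0 < C)
    (hw : 0 < w) (t : ℕ → ℝ) (hmono : StrictMono t) (hpos : ∀ k, 0 ≤ t k)
    (hbdd : BddAbove (Set.range t)) :
    ¬ (∀ k : ℕ, w * Real.exp (-lam * t (k + 1)) ≤
        C * (Real.exp (a * (t (k + 1) - t k)) - 1) ^ 2) :=
  stmt10_general a lam C w hw t hmono hbdd
end
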